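/- Conversely, let T be an n×n real symmetric tridiagonal unreduced matrix with distinct eigenvalues λ_1,...,λ_n, and suppose that the characteristic polynomial of T(2:n,2:n) equals (1/n) p_T'. If W is orthogonal with W^T T W = diag(λ_1,...,λ_n), then |W(1,j)| = 1/√n for every j. -/

import Mathlib

/-!
Write `T = W D Wᵀ` with `D = diag λ` and `W` orthogonal. Conjugating by `W` commutes with taking
the adjugate of the characteristic matrix, so the `(0,0)` entry of `adj (X - T)`, which is the
characteristic polynomial of `T(2:n,2:n)`, equals `∑ᵢ W₀ᵢ² ∏_{k ≠ i} (X - λₖ)`. Evaluating at `λⱼ`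
gives `W₀ⱼ² p_T'(λⱼ) = p_{T(2:n,2:n)}(λⱼ)`. Under the hypothesis on `T(2:n,2:n)` the right-hand
side is `p_T'(λⱼ) / n`, and `p_T'(λⱼ) ≠ 0` since the eigenvalues are simple, so `W₀ⱼ² = 1 / n`.
-/

open Polynomial Matrix Lagrange

namespace Matrix

variable {R : Type*} [CommRing R] {m : Type*} [Fintype m] [DecidableEq m]

lemma adjugate_eq_det_smul_transpose {W : Matrix m m R} (hW : Wᵀ * W = 1) :
    adjugate W = W.det • Wᵀ := by
  calc adjugate W = Wᵀ * W * adjugate W := by rw [hW, Matrix.one_mul]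
    _ = W.det • Wᵀ := by rw [Matrix.mul_assoc, mul_adjugate, Matrix.mul_smul, Matrix.mul_one]

lemma adjugate_orthogonal_conj {W : Matrix m m R} (hW : Wᵀ * W = 1) (A : Matrix m m R) :
    adjugate (W * A * Wᵀ) = W * adjugate A * Wᵀ := by
  have hWt : Wᵀᵀ * Wᵀ = 1 := by
    rw [transpose_transpose]; exact mul_eq_one_comm.mp hW
  have hdet : W.det * W.det = 1 := by simpa using congrArg det hW
  rw [adjugate_mul_distrib, adjugate_mul_distrib, adjugate_eq_det_smul_transpose hW,
    adjugate_eq_det_smul_transpose hWt, transpose_transpose, det_transpose]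
  simp only [Matrix.smul_mul, Matrix.mul_smul, smul_smul, hdet, one_smul, Matrix.mul_assoc]

lemma charmatrix_orthogonal_conj {W : Matrix m m R} (hW : Wᵀ * W = 1) (A : Matrix m m R) :
    charmatrix (W * A * Wᵀ) = W.map C * charmatrix A * (W.map C)ᵀ := by
  have hWC : W.map C * (W.map C)ᵀ = 1 := by
    rw [← transpose_map, ← Matrix.map_mul, mul_eq_one_comm.mp hW,
      Matrix.map_one _ (map_zero _) (map_one _)]
  simp only [charmatrix, RingHom.mapMatrix_apply, Matrix.map_mul, transpose_map,
    Matrix.mul_sub, Matrix.sub_mul]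
  rw [← (scalar_commute X (Commute.all X) (W.map C)).eq, Matrix.mul_assoc _ (W.map C), hWC,
    Matrix.mul_one]

lemma charpoly_orthogonal_conj {W : Matrix m m R} (hW : Wᵀ * W = 1) (A : Matrix m m R) :
    (W * A * Wᵀ).charpoly = A.charpoly := by
  rw [charpoly_mul_comm, ← Matrix.mul_assoc, hW, Matrix.one_mul]

lemma charpoly_eq_nodal {T W : Matrix m m R} {lam : m → R} (hW : Wᵀ * W = 1)
    (hT : T = W * diagonal lam * Wᵀ) : T.charpoly = nodal Finset.univ lam := by
  rw [hT, charpoly_orthogonal_conj hW, charpoly_diagonal, nodal]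

lemma charmatrix_submatrix {k : Type*} [Fintype k] [DecidableEq k] (M : Matrix m m R)
    {e : k → m} (he : Function.Injective e) :
    charmatrix (M.submatrix e e) = (charmatrix M).submatrix e e := by
  ext i j : 1
  rcases eq_or_ne i j with rfl | hij
  · simp
  · simp [hij, he.ne hij]

end Matrix

section OrthogonallyDiagonalized

variable {R : Type*} [CommRing R] {n : ℕ} {T W : Matrix (Fin (n + 1)) (Fin (n + 1)) R}
  {lam : Fin (n + 1) → R}

lemma charpoly_submatrix_succ_eq_sum (hW : Wᵀ * W = 1) (hT : T = W * diagonal lam * Wᵀ) :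
    (T.submatrix Fin.succ Fin.succ).charpoly =
      ∑ i, C (W 0 i ^ 2) * nodal (Finset.univ.erase i) lam := by
  have hWC : (W.map C)ᵀ * W.map C = 1 := by
    rw [← transpose_map, ← Matrix.map_mul, hW, Matrix.map_one _ (map_zero _) (map_one _)]
  have hadj : adjugate (charmatrix T) =
      W.map C * diagonal (fun i => nodal (Finset.univ.erase i) lam) * (W.map C)ᵀ := by
    rw [hT, charmatrix_orthogonal_conj hW, adjugate_orthogonal_conj hWC, charmatrix_diagonal,
      adjugate_diagonal]
    rfl
  calc (T.submatrix Fin.succ Fin.succ).charpoly = adjugate (charmatrix T) 0 0 := by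
        rw [adjugate_fin_succ_eq_det_submatrix]
        simp [charpoly, charmatrix_submatrix _ (Fin.succ_injective n)]
    _ = ∑ i, C (W 0 i ^ 2) * nodal (Finset.univ.erase i) lam := by
        rw [hadj, mul_apply]
        simp only [mul_diagonal, transpose_apply, map_apply]
        refine Finset.sum_congr rfl fun i _ => ?_
        rw [map_pow]
        ring

lemma sq_mul_eval_derivative_charpoly (hW : Wᵀ * W = 1) (hT : T = W * diagonal lam * Wᵀ)
    (j : Fin (n + 1)) :
    W 0 j ^ 2 * (derivative T.charpoly).eval (lam j) =
      (T.submatrix Fin.succ Fin.succ).charpoly.eval (lam j) := by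
  have hvanish : ∀ i ≠ j, (nodal (Finset.univ.erase i) lam).eval (lam j) = 0 := fun i hij =>
    eval_nodal_at_node (Finset.mem_erase.mpr ⟨hij.symm, Finset.mem_univ j⟩)
  rw [charpoly_eq_nodal hW hT, eval_nodal_derivative_eval_node_eq (Finset.mem_univ j),
    charpoly_submatrix_succ_eq_sum hW hT, eval_finsetSum,
    Fintype.sum_eq_single j fun i hij => by rw [eval_mul, hvanish i hij, mul_zero], eval_mul,
    eval_C]

end OrthogonallyDiagonalized

theorem stmt5_general (n : ℕ) (T W : Matrix (Fin (n + 1)) (Fin (n + 1)) ℝ)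
    (lam : Fin (n + 1) → ℝ) (hdist : Function.Injective lam)
    (hchar : (T.submatrix Fin.succ Fin.succ).charpoly =
      ((n + 1 : ℝ))⁻¹ • derivative T.charpoly)
    (hW : Wᵀ * W = 1) (hTW : Wᵀ * T * W = Matrix.diagonal lam) :
    ∀ j, |W 0 j| = 1 / Real.sqrt (n + 1) := by
  intro j
  have hT : T = W * diagonal lam * Wᵀ := by
    have hWWt := mul_eq_one_comm.mp hW
    calc T = (W * Wᵀ) * T * (W * Wᵀ) := by rw [hWWt, Matrix.one_mul, Matrix.mul_one]
      _ = W * diagonal lam * Wᵀ := by simp only [← hTW, Matrix.mul_assoc]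
  have hsimple : (derivative T.charpoly).eval (lam j) ≠ 0 := by
    rw [charpoly_eq_nodal hW hT, eval_nodal_derivative_eval_node_eq (Finset.mem_univ j)]
    exact eval_nodal_not_at_node fun k hk h => (Finset.mem_erase.mp hk).1 (hdist h).symm
  have hsq : W 0 j ^ 2 = ((n : ℝ) + 1)⁻¹ := by
    have key := sq_mul_eval_derivative_charpoly hW hT j
    rw [hchar, eval_smul, smul_eq_mul] at key
    exact mul_right_cancel₀ hsimple key
  rw [← Real.sqrt_sq_eq_abs, hsq, Real.sqrt_inv, one_div]

theorem stmt5 (n : ℕ) (T W : Matrix (Fin (n + 1)) (Fin (n + 1)) ℝ)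
    (hTsymm : T.IsSymm)
    (hTtri : ∀ i j : Fin (n + 1), (i : ℕ) + 2 ≤ (j : ℕ) → T i j = 0)
    (hTunred : ∀ i j : Fin (n + 1), (i : ℕ) = (j : ℕ) + 1 → T i j ≠ 0)
    (lam : Fin (n + 1) → ℝ) (hdist : Function.Injective lam)
    (hchar : (T.submatrix Fin.succ Fin.succ).charpoly =
      ((n + 1 : ℝ))⁻¹ • derivative T.charpoly)
    (hW : Wᵀ * W = 1) (hTW : Wᵀ * T * W = Matrix.diagonal lam) :
    ∀ j, |W 0 j| = 1 / Real.sqrt (n + 1) :=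
  stmt5_general n T W lam hdist hchar hW hTW
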